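/- Let a, b be points at distance D apart with 0 < ω ≤ D ≤ 2r, and let θ = arccos(D/(2r)). Then the area of the lens-shaped intersection of the two closed disks of radius r centered at a and b equals 2r²(θ - sinθ·cosθ). -/

import Mathlib

/-!
After an isometry the centres are `(0, 0)` and `(0, D)`. The lens meets the line parallel to the
axis of centres at distance `y` from it in the interval `[D - s, s]`, `s = √(r² - y²)`, of length
`2s - D`, which is nonnegative exactly when `|y| ≤ k := √(r² - (D/2)²)`. Integrating with the
primitive `(y √(r² - y²) + r² arcsin (y/r)) / 2` of `√(r² - y²)` gives the area
`2r² arcsin (k/r) - Dk`, which is `2r²(θ - sin θ cos θ)` since `cos θ = D/(2r)` and `sin θ = k/r`.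
-/

open Real MeasureTheory Module

theorem exists_orthonormalBasis_repr_eq_norm_smul_single {ι E : Type*} [Fintype ι]
    [DecidableEq ι] [NormedAddCommGroup E] [InnerProductSpace ℝ E] [FiniteDimensional ℝ E]
    (card_ι : finrank ℝ E = Fintype.card ι) (v : E) (i : ι) :
    ∃ B : OrthonormalBasis ι ℝ E, B.repr v = ‖v‖ • EuclideanSpace.single i 1 := by
  obtain ⟨u, hu, hvu⟩ : ∃ u : E, ‖u‖ = 1 ∧ v = ‖v‖ • u := by
    rcases eq_or_ne v 0 with rfl | hv
    · have : Nonempty ι := ⟨i⟩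
      have : Nontrivial E := finrank_pos_iff.mp (card_ι ▸ Fintype.card_pos)
      obtain ⟨u, hu⟩ := exists_norm_eq E zero_le_one
      exact ⟨u, hu, by simp⟩
    · exact ⟨‖v‖⁻¹ • v, norm_smul_inv_norm hv,
        by rw [smul_smul, mul_inv_cancel₀ (norm_ne_zero_iff.mpr hv), one_smul]⟩
  obtain ⟨B, hB⟩ := Orthonormal.exists_orthonormalBasis_extension_of_card_eq card_ι
    (v := fun _ => u) (s := {i}) (orthonormal_subsingleton_iff.mpr fun _ => hu)
  refine ⟨B, ?_⟩
  nth_rewrite 1 [hvu]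
  rw [map_smul, ← hB i rfl, B.repr_self]

theorem hasDerivAt_primitive_sqrt_sq_sub_sq {r x : ℝ} (hx : x ∈ Set.Ioo (-r) r) :
    HasDerivAt (fun x => (x * √(r ^ 2 - x ^ 2) + r ^ 2 * arcsin (x / r)) / 2)
      √(r ^ 2 - x ^ 2) x := by
  obtain ⟨hlo, hhi⟩ := hx
  have hr : 0 < r := by linarith
  have hpos : 0 < r ^ 2 - x ^ 2 := by nlinarith
  have hsqrt : HasDerivAt (fun x => √(r ^ 2 - x ^ 2)) (-(2 * x) / (2 * √(r ^ 2 - x ^ 2))) x := by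
    simpa using ((hasDerivAt_pow 2 x).const_sub (r ^ 2)).sqrt hpos.ne'
  have harcsin : HasDerivAt (fun x => arcsin (x / r)) (1 / √(1 - (x / r) ^ 2) * (1 / r)) x :=
    (hasDerivAt_arcsin (by rw [ne_eq, div_eq_iff hr.ne']; linarith)
      (by rw [ne_eq, div_eq_iff hr.ne']; linarith)).comp x ((hasDerivAt_id x).div_const r)
  have hsqrt_div : √(1 - (x / r) ^ 2) = √(r ^ 2 - x ^ 2) / r := by
    rw [show 1 - (x / r) ^ 2 = (r ^ 2 - x ^ 2) / r ^ 2 by field_simp, sqrt_div hpos.le,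
      sqrt_sq hr.le]
  refine ((((hasDerivAt_id x).mul hsqrt).add (harcsin.const_mul (r ^ 2))).div_const 2).congr_deriv
    ?_
  rw [hsqrt_div, id]
  have hs : 0 < √(r ^ 2 - x ^ 2) := sqrt_pos.mpr hpos
  have hsq := sq_sqrt hpos.le
  field_simp
  linear_combination -hsq

theorem integral_sqrt_sq_sub_sq_symm {r k : ℝ} (hk : 0 ≤ k) (hkr : k ≤ r) :
    ∫ x in -k..k, √(r ^ 2 - x ^ 2) = k * √(r ^ 2 - k ^ 2) + r ^ 2 * arcsin (k / r) := by
  have hcont : Continuous fun x : ℝ => √(r ^ 2 - x ^ 2) := by fun_prop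
  rw [intervalIntegral.integral_eq_sub_of_hasDerivAt_of_le (neg_le_self hk) (by fun_prop)
    (fun x hx => hasDerivAt_primitive_sqrt_sq_sub_sq
      (Set.Ioo_subset_Ioo (by linarith) hkr hx)) (hcont.intervalIntegrable _ _)]
  rw [neg_div, arcsin_neg, neg_sq]
  ring

def planarLens (r D : ℝ) : Set (ℝ × ℝ) :=
  {p | p.1 ^ 2 + p.2 ^ 2 ≤ r ^ 2 ∧ p.1 ^ 2 + (p.2 - D) ^ 2 ≤ r ^ 2}

theorem measurableSet_planarLens (r D : ℝ) : MeasurableSet (planarLens r D) := by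
  unfold planarLens
  measurability

theorem volume_preimage_mk_planarLens {r D : ℝ} (hD : 0 ≤ D) (y : ℝ) :
    volume (Prod.mk y ⁻¹' planarLens r D) = ENNReal.ofReal (2 * √(r ^ 2 - y ^ 2) - D) := by
  rcases le_or_gt (y ^ 2) (r ^ 2) with hy | hy
  · set s := √(r ^ 2 - y ^ 2)
    have hs : 0 ≤ s := sqrt_nonneg _
    have hs2 : s ^ 2 = r ^ 2 - y ^ 2 := sq_sqrt (by linarith)
    have : Prod.mk y ⁻¹' planarLens r D = Set.Icc (D - s) s := by
      ext x
      simp only [planarLens, Set.mem_preimage, Set.mem_ofPred_eq, Set.mem_Icc]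
      constructor
      · rintro ⟨h1, h2⟩
        constructor <;> nlinarith
      · rintro ⟨h1, h2⟩
        constructor <;> nlinarith
    rw [this, volume_Icc]
    ring_nf
  · have : Prod.mk y ⁻¹' planarLens r D = ∅ :=
      Set.eq_empty_of_forall_notMem fun x hx => by nlinarith [hx.1]
    rw [this, sqrt_eq_zero'.mpr (by linarith)]
    simp [hD]

theorem volume_planarLens {r D : ℝ} (hD0 : 0 ≤ D) (hD : D ≤ 2 * r) :
    volume (planarLens r D) =
      ENNReal.ofReal (2 * r ^ 2 * arcsin (√(r ^ 2 - (D / 2) ^ 2) / r) -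
        D * √(r ^ 2 - (D / 2) ^ 2)) := by
  set k := √(r ^ 2 - (D / 2) ^ 2)
  have hk : 0 ≤ k := sqrt_nonneg _
  have hk2 : k ^ 2 = r ^ 2 - (D / 2) ^ 2 := sq_sqrt (by nlinarith)
  have hkr : k ≤ r := by nlinarith
  set f : ℝ → ℝ := fun y => 2 * √(r ^ 2 - y ^ 2) - D
  have hf : Continuous f := by fun_prop
  have hf_nonneg : ∀ y ∈ Set.Icc (-k) k, 0 ≤ f y := fun y hy => by
    have : D / 2 ≤ √(r ^ 2 - y ^ 2) := le_sqrt_of_sq_le (by nlinarith [hy.1, hy.2])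
    simp only [f]
    linarith
  have hf_support : (fun y => ENNReal.ofReal (f y)).support ⊆ Set.Icc (-k) k := fun y hy => by
    have hfy : 0 < f y := ENNReal.ofReal_pos.mp (pos_iff_ne_zero.mpr hy)
    have : D / 2 < √(r ^ 2 - y ^ 2) := by simp only [f] at hfy; linarith
    have : (D / 2) ^ 2 < r ^ 2 - y ^ 2 := (lt_sqrt (by positivity)).mp this
    exact ⟨by nlinarith, by nlinarith⟩
  rw [Measure.volume_eq_prod, Measure.prod_apply (measurableSet_planarLens r D)]
  simp_rw [volume_preimage_mk_planarLens hD0]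
  rw [← setLIntegral_eq_of_support_subset hf_support, ← ofReal_integral_eq_lintegral_ofReal
    (hf.integrableOn_Icc) (ae_restrict_of_forall_mem measurableSet_Icc hf_nonneg),
    integral_Icc_eq_integral_Ioc, ← intervalIntegral.integral_of_le (neg_le_self hk)]
  have hsqrt_k : √(r ^ 2 - k ^ 2) = D / 2 := by
    rw [hk2, sub_sub_cancel, sqrt_sq (by linarith)]
  have hcont : Continuous fun y : ℝ => √(r ^ 2 - y ^ 2) := by fun_prop
  congr 1
  rw [intervalIntegral.integral_sub ((hcont.intervalIntegrable _ _).const_mul 2)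
    intervalIntegrable_const, intervalIntegral.integral_const_mul,
    integral_sqrt_sq_sub_sq_symm hk hkr, intervalIntegral.integral_const, hsqrt_k, smul_eq_mul]
  ring

theorem volume_inter_setOf_dist_le (a b : EuclideanSpace ℝ (Fin 2)) {r : ℝ} (hr : 0 ≤ r) :
    volume ({x | dist a x ≤ r} ∩ {x | dist b x ≤ r}) = volume (planarLens r (dist a b)) := by
  obtain ⟨B, hB⟩ :=
    exists_orthonormalBasis_repr_eq_norm_smul_single (by simp) (b - a) (1 : Fin 2)
  let φ : EuclideanSpace ℝ (Fin 2) → ℝ × ℝ := fun x => (B.repr (x - a) 0, B.repr (x - a) 1)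
  have hφ : MeasurePreserving φ :=
    ((volume_preserving_finTwoArrow ℝ).comp (PiLp.volume_preserving_ofLp _)).comp
      (B.measurePreserving_repr.comp (measurePreserving_sub_right volume a))
  have hnorm (w : EuclideanSpace ℝ (Fin 2)) : ‖w‖ ≤ r ↔ w 0 ^ 2 + w 1 ^ 2 ≤ r ^ 2 := by
    rw [← sq_le_sq₀ (norm_nonneg _) hr, EuclideanSpace.norm_sq_eq, Fin.sum_univ_two,
      norm_eq_abs, norm_eq_abs, sq_abs, sq_abs]
  have hset : {x | dist a x ≤ r} ∩ {x | dist b x ≤ r} = φ ⁻¹' planarLens r (dist a b) := by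
    ext x
    have ha : dist a x = ‖B.repr (x - a)‖ := by rw [B.repr.norm_map, dist_comm, dist_eq_norm]
    have hb : dist b x = ‖B.repr (x - a) - dist a b • EuclideanSpace.single 1 1‖ := by
      rw [dist_comm a b, dist_eq_norm b a, ← hB, ← map_sub, B.repr.norm_map, dist_comm,
        dist_eq_norm, sub_sub_sub_cancel_right]
    simp [ha, hb, hnorm, φ, planarLens]
  rw [hset, hφ.measure_preimage (measurableSet_planarLens r _).nullMeasurableSet]

open Real MeasureTheory in
theorem stmt_8_general (a b : EuclideanSpace ℝ (Fin 2)) (r : ℝ) (hr : 0 < r)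
    (hD : dist a b ≤ 2 * r) :
    volume ({x : EuclideanSpace ℝ (Fin 2) | dist a x ≤ r} ∩
        {x : EuclideanSpace ℝ (Fin 2) | dist b x ≤ r}) =
      ENNReal.ofReal (2 * r ^ 2 *
        (Real.arccos (dist a b / (2 * r)) -
          Real.sin (Real.arccos (dist a b / (2 * r))) *
            Real.cos (Real.arccos (dist a b / (2 * r))))) := by
  set c := dist a b / (2 * r)
  have hc0 : 0 ≤ c := by positivity
  have hc1 : c ≤ 1 := (div_le_one (by positivity)).mpr hD
  have hD_eq : dist a b = 2 * r * c := by simp only [c]; field_simp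
  have hk : √(r ^ 2 - (dist a b / 2) ^ 2) = r * √(1 - c ^ 2) := by
    rw [hD_eq, show r ^ 2 - (2 * r * c / 2) ^ 2 = r ^ 2 * (1 - c ^ 2) by ring,
      sqrt_mul (sq_nonneg r), sqrt_sq hr.le]
  rw [volume_inter_setOf_dist_le a b hr.le, volume_planarLens dist_nonneg hD, hk,
    mul_div_cancel_left₀ _ hr.ne', ← arccos_eq_arcsin hc0, sin_arccos, cos_arccos (by linarith) hc1,
    hD_eq]
  ring_nf

open Real MeasureTheory in
/-- Lens area: if `0 < ω ≤ D ≤ 2r` with `D = d(a,b)` and `θ = arccos (D/(2r))`, the area of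
the intersection of the two closed disks of radius `r` around `a` and `b` is
`2r²(θ - sin θ cos θ)`. -/
theorem stmt_8 (a b : EuclideanSpace ℝ (Fin 2)) (r ω : ℝ) (hr : 0 < r)
    (hω : 0 < ω) (hωD : ω ≤ dist a b) (hD : dist a b ≤ 2 * r) :
    volume ({x : EuclideanSpace ℝ (Fin 2) | dist a x ≤ r} ∩
        {x : EuclideanSpace ℝ (Fin 2) | dist b x ≤ r}) =
      ENNReal.ofReal (2 * r ^ 2 *
        (Real.arccos (dist a b / (2 * r)) -
          Real.sin (Real.arccos (dist a b / (2 * r))) *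
            Real.cos (Real.arccos (dist a b / (2 * r))))) :=
  stmt_8_general a b r hr hD
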